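/- Fix d ≥ 1. There exists a constant C_d > 0 depending only on d such that for every Zygmund measure μ on ℝ^d, every h > 0 and every x, t ∈ ℝ^d with |x − t| < h/2, one has |Δ₂μ(x,h) − Δ₂μ(t,h)| ≤ C_d ‖μ‖_* (|x−t|/h) log(h/|x−t| + 1). -/

import Mathlib

noncomputable section
open MeasureTheory
open scoped ENNReal NNReal

/-- The cube in `ℝ^d` centred at `x` with side length `h` and edges parallel to
the axes. -/
def ecube (d : ℕ) (x : EuclideanSpace ℝ (Fin d)) (h : ℝ) :
    Set (EuclideanSpace ℝ (Fin d)) :=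
  {y | ∀ i, x i - h / 2 ≤ y i ∧ y i < x i + h / 2}

/-- First divided difference of a signed measure on cubes:
`Δ₁μ(x,h) = μ(Q(x,h))/|Q(x,h)|`. -/
def delta1M (d : ℕ) (μ : SignedMeasure (EuclideanSpace ℝ (Fin d)))
    (x : EuclideanSpace ℝ (Fin d)) (h : ℝ) : ℝ :=
  μ (ecube d x h) / h ^ d

/-- Second divided difference of a signed measure on cubes:
`Δ₂μ(x,h) = Δ₁μ(x,h) - Δ₁μ(x,2h)`. -/
def delta2M (d : ℕ) (μ : SignedMeasure (EuclideanSpace ℝ (Fin d)))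
    (x : EuclideanSpace ℝ (Fin d)) (h : ℝ) : ℝ :=
  delta1M d μ x h - delta1M d μ x (2 * h)

/-- `M` is a bound for the Zygmund seminorm of the measure `μ`. -/
def ZygMBound (d : ℕ) (μ : SignedMeasure (EuclideanSpace ℝ (Fin d))) (M : ℝ) : Prop :=
  ∀ (x : EuclideanSpace ℝ (Fin d)) (h : ℝ), 0 < h → |delta2M d μ x h| ≤ M

/-- `μ` is a Zygmund measure. -/
def MemZygmundM (d : ℕ) (μ : SignedMeasure (EuclideanSpace ℝ (Fin d))) : Prop :=
  ∃ M, ZygMBound d μ M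

/-- The Zygmund seminorm `‖μ‖_* = sup_{x, h>0} |Δ₂μ(x,h)|` of a measure. -/
def zygMNorm (d : ℕ) (μ : SignedMeasure (EuclideanSpace ℝ (Fin d))) : ℝ :=
  sInf {M | 0 ≤ M ∧ ZygMBound d μ M}

/-- `μ` is compactly supported. -/
def CompactSupportM (d : ℕ) (μ : SignedMeasure (EuclideanSpace ℝ (Fin d))) : Prop :=
  ∃ K : Set (EuclideanSpace ℝ (Fin d)), IsCompact K ∧
    ∀ s, MeasurableSet s → Disjoint s K → μ s = 0

/-!
Cut `Q(y, h)` into `2 ^ (j d)` cells of side `σ = h / 2 ^ j`. Then `Δ₂μ(y, h)` is the average over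
the cells `Q(z, σ)` of the defect `Δ₁μ(z, σ) - avg Δ₁μ(z ± h / 2, σ)`. This defect is `Δ₂μ(z, h)`
for `j = 0`, and halving `σ` changes it by two second differences at scale `σ`, so it is at most
`(2 j + 1) ‖μ‖_*`. Shifting `y` by `σ` along an axis changes the average only through two opposite
faces of `2 ^ (j (d - 1))` cells, hence moves `Δ₂μ(·, h)` by at most `2 (2 j + 1) 2 ^ (-j) ‖μ‖_*`.
A dyadic shift `s < h 2 ^ (-n)` is a sum of such steps with distinct `j > n`, costing
`O(n 2 ^ (-n)) ‖μ‖_*`, which is `O((s / h) log (h / s)) ‖μ‖_*` when `2 ^ (-n) ≈ s / h`. General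
shifts follow by dyadic approximation from below, and `x` is moved to `t` one coordinate at a time.
-/

open Filter Topology Finset Function Real

lemma abs_sum_div_card_le {ι : Type*} [Fintype ι] [Nonempty ι] {f : ι → ℝ} {M : ℝ}
    (hf : ∀ k, |f k| ≤ M) : |(∑ k, f k) / Fintype.card ι| ≤ M := by
  rw [abs_div, Nat.abs_cast, div_le_iff₀ (by positivity), mul_comm, ← nsmul_eq_mul]
  exact (abs_sum_le_sum_abs _ _).trans (sum_le_card_nsmul _ _ _ fun k _ => hf k)

lemma exists_nat_lt_mul_le_lt {u σ : ℝ} {N : ℕ} (hσ : 0 < σ) (hu : 0 ≤ u) (huN : u < N * σ) :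
    ∃ k < N, k * σ ≤ u ∧ u < (k + 1) * σ := by
  refine ⟨⌊u / σ⌋₊, Nat.floor_lt (by positivity) |>.2 ((div_lt_iff₀ hσ).2 huN), ?_, ?_⟩
  · exact (le_div_iff₀ hσ).1 (Nat.floor_le (by positivity))
  · exact (div_lt_iff₀ hσ).1 (Nat.lt_floor_add_one _)

-- Fubini in the coordinate `i`: along each line the sum telescopes to two boundary terms.
lemma mul_abs_sum_shift_sub_le {d N : ℕ} (i : Fin d) (W : (Fin d → ℕ) → ℝ) {B : ℝ}
    (hW : ∀ k, |W k| ≤ B) :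
    N * |∑ k : Fin d → Fin N, (W ((fun j => (k j : ℕ)) + Pi.single i 1) - W fun j => k j)| ≤
      2 * N ^ d * B := by
  let e := Equiv.funSplitAt i (Fin N)
  let φ : ({j // j ≠ i} → Fin N) → ℕ → ℝ := fun r b =>
    W fun j => if h : j = i then b else r ⟨j, h⟩
  have hφ : ∀ a r, W (fun j => e.symm (a, r) j) = φ r a ∧
      W ((fun j => (e.symm (a, r) j : ℕ)) + Pi.single i 1) = φ r (a + 1) := by
    intro a r
    constructor <;> congr 1 <;> funext j <;> by_cases hj : j = i <;> simp [e, hj]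
  have hline : ∀ r, ∑ a : Fin N, (φ r (a + 1) - φ r a) = φ r N - φ r 0 := fun r =>
    (Fin.sum_univ_eq_sum_range (fun a => φ r (a + 1) - φ r a) N).trans (sum_range_sub _ _)
  have hcard : (N : ℝ) ^ d = N * Fintype.card ({j // j ≠ i} → Fin N) := by
    have := Fintype.card_congr e
    rw [Fintype.card_prod, Fintype.card_fun, Fintype.card_fin, Fintype.card_fin] at this
    exact_mod_cast this
  rw [← e.symm.sum_comp, Fintype.sum_prod_type_right]
  simp only [hφ, hline, hcard]
  have hbound : |∑ r, (φ r N - φ r 0)| ≤ Fintype.card ({j // j ≠ i} → Fin N) * (2 * B) := by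
    refine (abs_sum_le_sum_abs _ _).trans ?_
    rw [← card_univ, ← nsmul_eq_mul, two_mul]
    exact sum_le_card_nsmul _ _ _ fun r _ => (abs_sub _ _).trans (add_le_add (hW _) (hW _))
  nlinarith [hbound, Nat.cast_nonneg (α := ℝ) N]

-- The summand is `T (j - 1) - T j` for `T j = (4 j + 10) / 2 ^ j`.
lemma sum_Ioc_two_mul_two_mul_add_one_div_two_pow_le (n J : ℕ) :
    ∑ j ∈ Ioc n J, 2 * (2 * (j : ℝ) + 1) / 2 ^ j ≤ (4 * n + 10) / 2 ^ n := by
  have telescope : ∀ k, ∑ j ∈ Ioc n (n + k), 2 * (2 * (j : ℝ) + 1) / 2 ^ j =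
      (4 * n + 10) / 2 ^ n - (4 * ↑(n + k) + 10) / 2 ^ (n + k) := by
    intro k
    induction k with
    | zero => simp
    | succ k ih =>
      rw [← add_assoc, sum_Ioc_succ_top (Nat.le_add_right n k), ih, pow_succ]
      push_cast
      field_simp
      ring
  rcases le_or_gt J n with hJ | hJ
  · rw [Ioc_eq_empty_of_le hJ, sum_empty]
    positivity
  · obtain ⟨k, rfl⟩ := Nat.exists_eq_add_of_le hJ.le
    rw [telescope, sub_le_self_iff]
    positivity

lemma four_mul_add_ten_div_two_pow_le {h δ : ℝ} {n : ℕ} (hδ : 0 < δ) (hn : 2 ^ n * (2 * δ) ≤ h)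
    (hn' : h < 2 ^ (n + 1) * (2 * δ)) : (4 * n + 10) / 2 ^ n ≤ 56 * (δ / h * log (h / δ + 1)) := by
  have hh : 0 < h := lt_of_lt_of_le (by positivity) hn
  have hpow : (2 : ℝ) ^ (n + 1) ≤ h / δ := by rw [le_div_iff₀ hδ, pow_succ]; linarith
  have hlog : ((n : ℝ) + 1) / 2 ≤ log (h / δ + 1) := by
    calc ((n : ℝ) + 1) / 2 ≤ (n + 1) * log 2 := by nlinarith [log_two_gt_d9]
      _ = log (2 ^ (n + 1)) := by rw [log_pow]; push_cast; ring
      _ ≤ log (h / δ + 1) := log_le_log (by positivity) (by linarith)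
  have hlog_one : 1 ≤ log (h / δ + 1) := by
    rw [le_log_iff_exp_le (by positivity)]
    have : (2 : ℝ) ≤ 2 ^ (n + 1) := le_self_pow₀ one_le_two n.succ_ne_zero
    linarith [exp_one_lt_d9]
  have hinv : 1 / (2 : ℝ) ^ n < 4 * (δ / h) := by
    rw [div_lt_iff₀ (by positivity), mul_div_assoc', div_mul_eq_mul_div, lt_div_iff₀ hh]
    rw [pow_succ] at hn'
    linarith
  calc (4 * (n : ℝ) + 10) / 2 ^ n = (4 * n + 10) * (1 / 2 ^ n) := by ring
    _ ≤ (14 * log (h / δ + 1)) * (4 * (δ / h)) :=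
        mul_le_mul (by linarith) hinv.le (by positivity) (by positivity)
    _ = _ := by ring

lemma eventually_nhdsLE_le_iff (s c : ℝ) : ∀ᶠ r in 𝓝[≤] s, (r ≤ c ↔ s ≤ c) := by
  rcases le_or_gt s c with hs | hs
  · filter_upwards [self_mem_nhdsWithin] with r hr using iff_of_true (le_trans hr hs) hs
  · filter_upwards [nhdsWithin_le_nhds (lt_mem_nhds hs)] with r hr
    exact iff_of_false hr.not_ge hs.not_ge

lemma eventually_nhdsLE_lt_iff (s c : ℝ) : ∀ᶠ r in 𝓝[≤] s, (c < r ↔ c < s) := by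
  rcases lt_or_ge c s with hs | hs
  · filter_upwards [nhdsWithin_le_nhds (lt_mem_nhds hs)] with r hr using iff_of_true hr hs
  · filter_upwards [self_mem_nhdsWithin] with r hr
    exact iff_of_false (le_trans (Set.mem_Iic.1 hr) hs).not_gt hs.not_gt

lemma tendsto_floor_mul_div_two_pow {h s : ℝ} (hh : 0 < h) (hs : 0 ≤ s) :
    Tendsto (fun J : ℕ => ⌊s * 2 ^ J / h⌋₊ * (h / 2 ^ J)) atTop (𝓝[≤] s) := by
  have hle : ∀ J : ℕ, ⌊s * 2 ^ J / h⌋₊ * (h / 2 ^ J) ≤ s := fun J => by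
    calc _ ≤ s * 2 ^ J / h * (h / 2 ^ J) := by gcongr; exact Nat.floor_le (by positivity)
      _ = s := by field_simp
  have hgt : ∀ J : ℕ, s - h / 2 ^ J < ⌊s * 2 ^ J / h⌋₊ * (h / 2 ^ J) := fun J => by
    calc s - h / 2 ^ J = (s * 2 ^ J / h - 1) * (h / 2 ^ J) := by field_simp
      _ < _ := mul_lt_mul_of_pos_right (by linarith [Nat.lt_floor_add_one (s * 2 ^ J / h)])
        (by positivity)
  have hlim : Tendsto (fun J : ℕ => s - h / 2 ^ J) atTop (𝓝 s) := by
    simpa using (tendsto_const_nhds (x := s)).sub <| (tendsto_const_nhds (x := h)).div_atTop <|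
      tendsto_pow_atTop_atTop_of_one_lt (one_lt_two (α := ℝ))
  refine tendsto_nhdsWithin_iff.2 ⟨?_, Eventually.of_forall hle⟩
  exact tendsto_of_tendsto_of_tendsto_of_le_of_le hlim tendsto_const_nhds (fun J => (hgt J).le) hle

lemma MeasureTheory.SignedMeasure.tendsto_apply_of_tendsto_indicator {α ι : Type*}
    [MeasurableSpace α] (μ : SignedMeasure α) {L : Filter ι} [L.IsCountablyGenerated]
    {As : ι → Set α} {A : Set α} (hAs : ∀ i, MeasurableSet (As i)) (hA : MeasurableSet A)
    (h_lim : ∀ x, ∀ᶠ i in L, x ∈ As i ↔ x ∈ A) : Tendsto (fun i => μ (As i)) L (𝓝 (μ A)) := by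
  rw [← μ.toSignedMeasure_toJordanDecomposition]
  simp only [JordanDecomposition.toSignedMeasure, sub_apply,
    Measure.toSignedMeasure_apply_measurable (hAs _), Measure.toSignedMeasure_apply_measurable hA]
  exact ((ENNReal.tendsto_toReal (measure_ne_top _ _)).comp
      (tendsto_measure_of_tendsto_indicator_of_isFiniteMeasure L _ hAs h_lim)).sub
    ((ENNReal.tendsto_toReal (measure_ne_top _ _)).comp
      (tendsto_measure_of_tendsto_indicator_of_isFiniteMeasure L _ hAs h_lim))

lemma abs_sub_le_of_abs_add_single_sub_le {d : ℕ} (f : EuclideanSpace ℝ (Fin d) → ℝ) {δ B : ℝ}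
    (hf : ∀ y i r, |r| ≤ δ → |f (y + EuclideanSpace.single i r) - f y| ≤ B)
    {x t : EuclideanSpace ℝ (Fin d)} (hxt : dist x t ≤ δ) : |f x - f t| ≤ d * B := by
  have hcoord : ∀ j, |t j - x j| ≤ δ := fun j => by
    rw [abs_sub_comm]
    exact (PiLp.norm_apply_le (x - t) j).trans hxt
  let p : Finset (Fin d) → EuclideanSpace ℝ (Fin d) := fun S =>
    x + ∑ j ∈ S, EuclideanSpace.single j (t j - x j)
  have hpath : ∀ S, |f x - f (p S)| ≤ #S * B := by
    intro S
    induction S using Finset.induction_on with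
    | empty => simp [p]
    | insert i S hi ih =>
      have hstep : p (insert i S) = p S + EuclideanSpace.single i (t i - x i) := by
        simp only [p, sum_insert hi]
        abel
      rw [hstep, card_insert_of_notMem hi]
      calc |f x - f (p S + EuclideanSpace.single i (t i - x i))|
          ≤ |f x - f (p S)| + |f (p S + EuclideanSpace.single i (t i - x i)) - f (p S)| :=
            (abs_sub_le _ (f (p S)) _).trans_eq (by rw [abs_sub_comm (f (p S))])
        _ ≤ #S * B + B := add_le_add ih (hf _ i _ (hcoord i))
        _ = _ := by push_cast; ring
  have hend : p univ = t := by
    ext k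
    simp [p]
  simpa [hend] using hpath univ

namespace ZygmundMeasure

variable {d : ℕ}

lemma nonneg_of_zygMBound {μ : SignedMeasure (EuclideanSpace ℝ (Fin d))} {M : ℝ}
    (hM : ZygMBound d μ M) : 0 ≤ M :=
  (abs_nonneg _).trans (hM 0 1 one_pos)

lemma zygMBound_zygMNorm {μ : SignedMeasure (EuclideanSpace ℝ (Fin d))} (hμ : MemZygmundM d μ) :
    ZygMBound d μ (zygMNorm d μ) := by
  obtain ⟨M, hM⟩ := hμ
  have hne : {M | 0 ≤ M ∧ ZygMBound d μ M}.Nonempty :=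
    ⟨max M 0, le_max_right _ _, fun x h hh => (hM x h hh).trans (le_max_left _ _)⟩
  exact fun x h hh => le_csInf hne fun b hb => hb.2 x h hh

lemma measurableSet_ecube (x : EuclideanSpace ℝ (Fin d)) (h : ℝ) :
    MeasurableSet (ecube d x h) := by
  have : ecube d x h = ⋂ i, (fun y : EuclideanSpace ℝ (Fin d) => y i) ⁻¹'
      Set.Ico (x i - h / 2) (x i + h / 2) := by
    ext y; simp [ecube]
  rw [this]
  exact .iInter fun i => (EuclideanSpace.proj (𝕜 := ℝ) i).continuous.measurable measurableSet_Ico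

/-- The centre of the cell with index `k` when `Q(c, N * σ)` is cut into `N ^ d` cubes of side
`σ`; indices outside `[0, N)` give the translates of these cells. -/
def gridCenter (c : EuclideanSpace ℝ (Fin d)) (N : ℕ) (σ : ℝ) (k : Fin d → ℕ) :
    EuclideanSpace ℝ (Fin d) :=
  c + WithLp.toLp 2 fun j => ((k j : ℝ) + 1 / 2 - N / 2) * σ

lemma mem_ecube_gridCenter {c y : EuclideanSpace ℝ (Fin d)} {N : ℕ} {σ : ℝ} {k : Fin d → ℕ} :
    y ∈ ecube d (gridCenter c N σ k) σ ↔
      ∀ j, c j - N * σ / 2 + k j * σ ≤ y j ∧ y j < c j - N * σ / 2 + (k j + 1) * σ := by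
  refine forall_congr' fun j => ?_
  simp only [gridCenter, PiLp.add_apply]
  constructor <;> rintro ⟨h₁, h₂⟩ <;> constructor <;> linarith

lemma ecube_eq_iUnion_gridCenter (c : EuclideanSpace ℝ (Fin d)) (N : ℕ) {σ : ℝ} (hσ : 0 < σ) :
    ecube d c (N * σ) = ⋃ k : Fin d → Fin N, ecube d (gridCenter c N σ (k ·)) σ := by
  ext y
  simp only [Set.mem_iUnion, mem_ecube_gridCenter]
  constructor
  · intro hy
    choose k hkN hk using fun j =>
      exists_nat_lt_mul_le_lt hσ (N := N) (u := y j - (c j - N * σ / 2)) (by linarith [(hy j).1])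
        (by linarith [(hy j).2])
    exact ⟨fun j => ⟨k j, hkN j⟩, fun j => ⟨by linarith [hk j], by linarith [hk j]⟩⟩
  · rintro ⟨k, hk⟩ j
    have hkN : (k j : ℝ) + 1 ≤ N := by exact_mod_cast (k j).2
    have := hk j
    constructor <;> nlinarith [(k j).val.cast_nonneg (α := ℝ)]

lemma pairwise_disjoint_ecube_gridCenter (c : EuclideanSpace ℝ (Fin d)) (N : ℕ) {σ : ℝ}
    (hσ : 0 < σ) : Pairwise (Disjoint on fun k : Fin d → ℕ => ecube d (gridCenter c N σ k) σ) := by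
  intro k k' hne
  rw [Function.onFun, Set.disjoint_left]
  intro y hy hy'
  rw [mem_ecube_gridCenter] at hy hy'
  obtain ⟨j, hj⟩ := Function.ne_iff.1 hne
  obtain ⟨h₁, h₂⟩ := hy j
  obtain ⟨h₁', h₂'⟩ := hy' j
  rcases Nat.lt_or_gt_of_ne hj with hlt | hlt
  · have : (k j : ℝ) + 1 ≤ k' j := by exact_mod_cast hlt
    nlinarith
  · have : (k' j : ℝ) + 1 ≤ k j := by exact_mod_cast hlt
    nlinarith

lemma apply_ecube_eq_sum_gridCenter (μ : SignedMeasure (EuclideanSpace ℝ (Fin d)))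
    (c : EuclideanSpace ℝ (Fin d)) (N : ℕ) {σ : ℝ} (hσ : 0 < σ) :
    μ (ecube d c (N * σ)) = ∑ k : Fin d → Fin N, μ (ecube d (gridCenter c N σ (k ·)) σ) := by
  have hdisj : Pairwise (Disjoint on fun k : Fin d → Fin N => ecube d (gridCenter c N σ (k ·)) σ) :=
    fun k k' hne => pairwise_disjoint_ecube_gridCenter c N hσ fun h =>
      hne <| funext fun j => Fin.ext (congrFun h j)
  rw [ecube_eq_iUnion_gridCenter c N hσ,
    VectorMeasure.of_disjoint_iUnion (fun _ => measurableSet_ecube _ _) hdisj, tsum_fintype]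

lemma delta1M_eq_sum_gridCenter (μ : SignedMeasure (EuclideanSpace ℝ (Fin d)))
    (c : EuclideanSpace ℝ (Fin d)) (N : ℕ) {σ : ℝ} (hσ : 0 < σ) :
    delta1M d μ c (N * σ) =
      (∑ k : Fin d → Fin N, delta1M d μ (gridCenter c N σ (k ·)) σ) / N ^ d := by
  rw [delta1M, apply_ecube_eq_sum_gridCenter μ c N hσ, mul_pow, sum_div, sum_div]
  simp only [delta1M, div_div, mul_comm]

lemma gridCenter_gridCenter_comm (z : EuclideanSpace ℝ (Fin d)) (N N' : ℕ) (σ σ' : ℝ)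
    (k k' : Fin d → ℕ) :
    gridCenter (gridCenter z N σ k) N' σ' k' = gridCenter (gridCenter z N' σ' k') N σ k := by
  simp only [gridCenter]
  exact add_right_comm _ _ _

lemma gridCenter_add_single (y : EuclideanSpace ℝ (Fin d)) (N : ℕ) (σ : ℝ) (i : Fin d)
    (k : Fin d → ℕ) :
    gridCenter (y + EuclideanSpace.single i σ) N σ k = gridCenter y N σ (k + Pi.single i 1) := by
  ext j
  by_cases hj : j = i
  · subst hj; simp [gridCenter]; ring
  · simp [gridCenter, hj]

/-- The defect of `Δ₁μ(·, σ)` at `z` against its average over the `2 ^ d` points `z ± h / 2`,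
the centres of the halves of `Q(z, 2h)`. -/
def cornerDefect (μ : SignedMeasure (EuclideanSpace ℝ (Fin d))) (h σ : ℝ)
    (z : EuclideanSpace ℝ (Fin d)) : ℝ :=
  delta1M d μ z σ - (∑ k : Fin d → Fin 2, delta1M d μ (gridCenter z 2 h (k ·)) σ) / 2 ^ d

lemma cornerDefect_self (μ : SignedMeasure (EuclideanSpace ℝ (Fin d))) {h : ℝ} (hh : 0 < h)
    (z : EuclideanSpace ℝ (Fin d)) : cornerDefect μ h h z = delta2M d μ z h := by
  have := delta1M_eq_sum_gridCenter μ z 2 hh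
  push_cast at this
  rw [cornerDefect, delta2M, this]

lemma cornerDefect_eq_add_cornerDefect_two_mul (μ : SignedMeasure (EuclideanSpace ℝ (Fin d)))
    (h σ : ℝ) (z : EuclideanSpace ℝ (Fin d)) :
    cornerDefect μ h σ z = delta2M d μ z σ -
      (∑ k : Fin d → Fin 2, delta2M d μ (gridCenter z 2 h (k ·)) σ) / 2 ^ d +
      cornerDefect μ h (2 * σ) z := by
  simp only [cornerDefect, delta2M, sum_sub_distrib]
  ring

lemma abs_cornerDefect_le {μ : SignedMeasure (EuclideanSpace ℝ (Fin d))} {M h : ℝ}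
    (hM : ZygMBound d μ M) (hh : 0 < h) (j : ℕ) (z : EuclideanSpace ℝ (Fin d)) :
    |cornerDefect μ h (h / 2 ^ j) z| ≤ (2 * j + 1) * M := by
  induction j generalizing z with
  | zero => simpa [cornerDefect_self μ hh] using hM z h hh
  | succ j ih =>
    have hσ : 0 < h / 2 ^ (j + 1) := by positivity
    have h2σ : 2 * (h / 2 ^ (j + 1)) = h / 2 ^ j := by rw [pow_succ]; field_simp
    have havg : |(∑ k : Fin d → Fin 2, delta2M d μ (gridCenter z 2 h (k ·)) (h / 2 ^ (j + 1))) /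
        2 ^ d| ≤ M := by
      simpa using abs_sum_div_card_le (ι := Fin d → Fin 2) fun k => hM _ _ hσ
    rw [cornerDefect_eq_add_cornerDefect_two_mul, h2σ]
    calc _ ≤ M + M + (2 * j + 1) * M :=
          (abs_add_le _ _).trans (add_le_add ((abs_sub _ _).trans (add_le_add (hM z _ hσ) havg))
            (ih z))
      _ = (2 * ↑(j + 1) + 1) * M := by push_cast; ring

lemma delta2M_eq_sum_cornerDefect (μ : SignedMeasure (EuclideanSpace ℝ (Fin d)))
    (y : EuclideanSpace ℝ (Fin d)) {N : ℕ} (hN : 0 < N) {σ h : ℝ} (hσ : 0 < σ)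
    (hNσ : N * σ = h) :
    delta2M d μ y h =
      (∑ k : Fin d → Fin N, cornerDefect μ h σ (gridCenter y N σ (k ·))) / N ^ d := by
  subst hNσ
  have hdouble := delta1M_eq_sum_gridCenter μ y 2 (σ := N * σ) (by positivity)
  push_cast at hdouble
  simp only [delta2M, hdouble, delta1M_eq_sum_gridCenter μ _ N hσ, cornerDefect,
    gridCenter_gridCenter_comm _ 2 N, sum_sub_distrib, sub_div]
  simp only [sum_div, div_div, mul_comm]
  rw [sum_comm]

lemma abs_delta2M_add_single_div_two_pow_sub_le {μ : SignedMeasure (EuclideanSpace ℝ (Fin d))}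
    {M h : ℝ} (hM : ZygMBound d μ M) (hh : 0 < h) (y : EuclideanSpace ℝ (Fin d)) (i : Fin d)
    (j : ℕ) :
    |delta2M d μ (y + EuclideanSpace.single i (h / 2 ^ j)) h - delta2M d μ y h| ≤
      2 * (2 * j + 1) / 2 ^ j * M := by
  set σ := h / 2 ^ j
  have hσ : 0 < σ := by positivity
  have hN : 0 < 2 ^ j := Nat.two_pow_pos j
  have hNσ : ((2 ^ j : ℕ) : ℝ) * σ = h := by simp only [σ]; push_cast; field_simp
  have key := mul_abs_sum_shift_sub_le (N := 2 ^ j) i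
    (fun m => cornerDefect μ h σ (gridCenter y (2 ^ j) σ m)) fun m => abs_cornerDefect_le hM hh j _
  have hdiv : ∀ S : ℝ, ((2 ^ j : ℕ) : ℝ) * |S| ≤ 2 * ((2 ^ j : ℕ) : ℝ) ^ d * ((2 * j + 1) * M) →
      |S / ((2 ^ j : ℕ) : ℝ) ^ d| ≤ 2 * (2 * j + 1) / 2 ^ j * M := by
    intro S hS
    push_cast at hS ⊢
    rw [abs_div, abs_of_pos (a := ((2 : ℝ) ^ j) ^ d) (by positivity), div_le_iff₀ (by positivity),
      show 2 * (2 * j + 1) / 2 ^ j * M * ((2 : ℝ) ^ j) ^ d =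
        2 * ((2 : ℝ) ^ j) ^ d * ((2 * j + 1) * M) / 2 ^ j by ring, le_div_iff₀ (by positivity)]
    linarith
  rw [delta2M_eq_sum_cornerDefect μ _ hN hσ hNσ, delta2M_eq_sum_cornerDefect μ _ hN hσ hNσ,
    ← sub_div, ← sum_sub_distrib]
  simp only [gridCenter_add_single]
  exact hdiv _ key

lemma abs_delta2M_add_single_nat_mul_div_two_pow_sub_le
    {μ : SignedMeasure (EuclideanSpace ℝ (Fin d))} {M h : ℝ} (hM : ZygMBound d μ M) (hh : 0 < h)
    (y : EuclideanSpace ℝ (Fin d)) (i : Fin d) (J m n : ℕ) (hm : m * 2 ^ n < 2 ^ J) :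
    |delta2M d μ (y + EuclideanSpace.single i (m * (h / 2 ^ J))) h - delta2M d μ y h| ≤
      (∑ j ∈ Ioc n J, 2 * (2 * (j : ℝ) + 1) / 2 ^ j) * M := by
  induction J generalizing m with
  | zero =>
    obtain rfl : m = 0 := by simpa using hm
    simp [show EuclideanSpace.single i (0 : ℝ) = 0 by simp]
  | succ J ih =>
    obtain ⟨q, rfl | rfl⟩ := Nat.even_or_odd' m
    · have hq : q * 2 ^ n < 2 ^ J := by rw [pow_succ] at hm; linarith
      have hshift : ((2 * q : ℕ) : ℝ) * (h / 2 ^ (J + 1)) = q * (h / 2 ^ J) := by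
        push_cast; rw [pow_succ]; field_simp
      rw [hshift]
      refine (ih q hq).trans (mul_le_mul_of_nonneg_right ?_ (nonneg_of_zygMBound hM))
      exact sum_le_sum_of_subset_of_nonneg (Ioc_subset_Ioc_right J.le_succ)
        fun j _ _ => by positivity
    · have hq : q * 2 ^ n < 2 ^ J := by rw [pow_succ] at hm; linarith [Nat.two_pow_pos n]
      have hnJ : n ≤ J := Nat.lt_succ_iff.1 <| (Nat.pow_lt_pow_iff_right (by norm_num)).1 <|
        lt_of_le_of_lt (Nat.le_mul_of_pos_left _ (by omega)) hm
      have hshift : ((2 * q + 1 : ℕ) : ℝ) * (h / 2 ^ (J + 1)) =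
          q * (h / 2 ^ J) + h / 2 ^ (J + 1) := by
        push_cast; rw [pow_succ]; field_simp
      have hsplit : EuclideanSpace.single i (q * (h / 2 ^ J) + h / 2 ^ (J + 1)) =
          EuclideanSpace.single i (q * (h / 2 ^ J)) + EuclideanSpace.single i (h / 2 ^ (J + 1)) :=
        PiLp.single_add 2 i
      rw [hshift, hsplit, ← add_assoc, sum_Ioc_succ_top hnJ, add_mul]
      calc _ ≤ _ := abs_sub_le _ (delta2M d μ (y + EuclideanSpace.single i (q * (h / 2 ^ J))) h) _
        _ ≤ _ := add_le_add (abs_delta2M_add_single_div_two_pow_sub_le hM hh _ i (J + 1)) (ih q hq)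
        _ = _ := by push_cast; ring

lemma eventually_mem_ecube_add_single_iff (x y : EuclideanSpace ℝ (Fin d)) (i : Fin d) (h s : ℝ) :
    ∀ᶠ r in 𝓝[≤] s, (x ∈ ecube d (y + EuclideanSpace.single i r) h ↔
      x ∈ ecube d (y + EuclideanSpace.single i s) h) := by
  filter_upwards [eventually_nhdsLE_le_iff s (x i - y i + h / 2),
    eventually_nhdsLE_lt_iff s (x i - y i - h / 2)] with r hle hlt
  refine forall_congr' fun j => ?_
  by_cases hj : j = i
  · subst hj
    have e₁ : ∀ t, y j + t - h / 2 ≤ x j ↔ t ≤ x j - y j + h / 2 := fun t => by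
      constructor <;> intro <;> linarith
    have e₂ : ∀ t, x j < y j + t + h / 2 ↔ x j - y j - h / 2 < t := fun t => by
      constructor <;> intro <;> linarith
    simp only [PiLp.add_apply, PiLp.single_eq_same, e₁, e₂, hle, hlt]
  · simp [hj]

lemma tendsto_delta2M_add_single (μ : SignedMeasure (EuclideanSpace ℝ (Fin d)))
    (y : EuclideanSpace ℝ (Fin d)) (i : Fin d) (h s : ℝ) :
    Tendsto (fun r => delta2M d μ (y + EuclideanSpace.single i r) h) (𝓝[≤] s)
      (𝓝 (delta2M d μ (y + EuclideanSpace.single i s) h)) := by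
  have hcube : ∀ h', Tendsto (fun r => μ (ecube d (y + EuclideanSpace.single i r) h')) (𝓝[≤] s)
      (𝓝 (μ (ecube d (y + EuclideanSpace.single i s) h'))) := fun h' =>
    SignedMeasure.tendsto_apply_of_tendsto_indicator μ (fun _ => measurableSet_ecube _ _)
      (measurableSet_ecube _ _) fun x => eventually_mem_ecube_add_single_iff x y i h' s
  exact ((hcube h).div_const _).sub ((hcube (2 * h)).div_const _)

-- Cubes are half-open, so `r ↦ μ(Q(y + r eᵢ, h))` is left continuous: approximate `s` from below
-- by dyadic multiples of `h`.
lemma abs_delta2M_add_single_sub_le_of_nonneg {μ : SignedMeasure (EuclideanSpace ℝ (Fin d))}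
    {M h s : ℝ} {n : ℕ} (hM : ZygMBound d μ M) (hh : 0 < h) (y : EuclideanSpace ℝ (Fin d))
    (i : Fin d) (hs : 0 ≤ s) (hsn : s * 2 ^ n < h) :
    |delta2M d μ (y + EuclideanSpace.single i s) h - delta2M d μ y h| ≤
      (4 * n + 10) / 2 ^ n * M := by
  refine le_of_tendsto (((tendsto_delta2M_add_single μ y i h s).comp
    (tendsto_floor_mul_div_two_pow hh hs)).sub_const _).abs (Eventually.of_forall fun J => ?_)
  refine (abs_delta2M_add_single_nat_mul_div_two_pow_sub_le hM hh y i J _ n ?_).trans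
    (mul_le_mul_of_nonneg_right (sum_Ioc_two_mul_two_mul_add_one_div_two_pow_le n J)
      (nonneg_of_zygMBound hM))
  have hfloor : (⌊s * 2 ^ J / h⌋₊ : ℝ) * 2 ^ n < 2 ^ J := by
    calc _ ≤ s * 2 ^ J / h * 2 ^ n := by gcongr; exact Nat.floor_le (by positivity)
      _ = s * 2 ^ n * 2 ^ J / h := by ring
      _ < h * 2 ^ J / h := by gcongr
      _ = 2 ^ J := by field_simp
  exact_mod_cast hfloor

lemma abs_delta2M_add_single_sub_le {μ : SignedMeasure (EuclideanSpace ℝ (Fin d))}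
    {M h r : ℝ} {n : ℕ} (hM : ZygMBound d μ M) (hh : 0 < h) (y : EuclideanSpace ℝ (Fin d))
    (i : Fin d) (hrn : |r| * 2 ^ n < h) :
    |delta2M d μ (y + EuclideanSpace.single i r) h - delta2M d μ y h| ≤
      (4 * n + 10) / 2 ^ n * M := by
  rcases le_or_gt 0 r with hr | hr
  · exact abs_delta2M_add_single_sub_le_of_nonneg hM hh y i hr (by rwa [abs_of_nonneg hr] at hrn)
  · have hback : y + EuclideanSpace.single i r + EuclideanSpace.single i (-r) = y := by
      rw [add_assoc, ← PiLp.single_add 2 i, add_neg_cancel]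
      simp
    rw [abs_sub_comm]
    simpa [hback] using abs_delta2M_add_single_sub_le_of_nonneg hM hh
      (y + EuclideanSpace.single i r) i (neg_nonneg.2 hr.le) (by rwa [abs_of_neg hr] at hrn)

end ZygmundMeasure

open ZygmundMeasure

/-- Estimate (5.1): for a Zygmund measure `μ` on `ℝ^d`, `h > 0` and
`|x - t| < h/2`, `|Δ₂μ(x,h) - Δ₂μ(t,h)| ≤ C_d ‖μ‖_* (|x-t|/h) log(h/|x-t| + 1)`. -/
theorem stmt16 (d : ℕ) (hd : 1 ≤ d) : ∃ C > (0:ℝ),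
    ∀ μ : SignedMeasure (EuclideanSpace ℝ (Fin d)), MemZygmundM d μ →
    ∀ (x t : EuclideanSpace ℝ (Fin d)) (h : ℝ), 0 < h → dist x t < h / 2 →
    |delta2M d μ x h - delta2M d μ t h| ≤
      C * zygMNorm d μ * ((dist x t / h) * Real.log (h / dist x t + 1)) := by
  refine ⟨56 * d, mul_pos (by norm_num) (Nat.cast_pos.2 hd), fun μ hμ x t h hh hxt => ?_⟩
  have hM := zygMBound_zygMNorm hμ
  rcases eq_or_ne x t with rfl | hne
  · simp
  have hδ : 0 < dist x t := dist_pos.2 hne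
  obtain ⟨n, hn, hn'⟩ := exists_nat_pow_near (x := h / (2 * dist x t))
    ((one_le_div (by positivity)).2 (by linarith)) one_lt_two
  rw [le_div_iff₀ (by positivity)] at hn
  rw [div_lt_iff₀ (by positivity)] at hn'
  have hcoord : ∀ y i r, |r| ≤ dist x t → |delta2M d μ (y + EuclideanSpace.single i r) h -
      delta2M d μ y h| ≤ (4 * n + 10) / 2 ^ n * zygMNorm d μ := fun y i r hr =>
    abs_delta2M_add_single_sub_le hM hh y i (by nlinarith [pow_pos two_pos n (M₀ := ℝ)])
  calc |delta2M d μ x h - delta2M d μ t h| ≤ d * ((4 * n + 10) / 2 ^ n * zygMNorm d μ) :=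
        abs_sub_le_of_abs_add_single_sub_le (delta2M d μ · h) hcoord le_rfl
    _ ≤ d * (56 * (dist x t / h * log (h / dist x t + 1)) * zygMNorm d μ) := by
        gcongr
        · exact nonneg_of_zygMBound hM
        · exact four_mul_add_ten_div_two_pow_le hδ hn hn'
    _ = _ := by ring
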